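/- arXiv:1810.00057 — 7 statements merged into one kernel-verified Lean document; each statement's English description precedes it below -/
import Mathlib

section
/- Let K be a field, V a K-vector space, and v : Fin (m+1) → V a family of m+1 vectors whose span has finite dimension m. Suppose there exist scalars c₀,…,c_m ∈ K, all nonzero, with ∑_{i=0}^{m} c_i • v_i = 0. Then for every proper subset S ⊊ Fin (m+1), the subfamily (v_i)_{i∈S} is linearly independent over K. -/
/-!
The dependency expresses any `v j` through the other vectors, so dropping `v j` does not shrink
the span. The remaining `m` vectors thus span a space of dimension `m`, hence are independent,
and every proper subfamily sits inside such a family.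
-/

open Submodule

section

variable {K V ι : Type*} [Field K] [AddCommGroup V] [Module K V] [Fintype ι]

theorem mem_span_image_ne_of_sum_smul_eq_zero [DecidableEq ι] {v : ι → V} {c : ι → K}
    (hsum : ∑ i, c i • v i = 0) {j : ι} (hj : c j ≠ 0) :
    v j ∈ span K (v '' {i | i ≠ j}) := by
  have hvj : v j = -(c j)⁻¹ • ∑ i ∈ Finset.univ.erase j, c i • v i := by
    rw [← Finset.add_sum_erase _ _ (Finset.mem_univ j)] at hsum
    rw [eq_neg_of_add_eq_zero_right hsum, neg_smul, smul_neg, neg_neg, smul_smul,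
      inv_mul_cancel₀ hj, one_smul]
  rw [hvj]
  refine smul_mem _ _ (Submodule.sum_mem _ fun i hi => smul_mem _ _ (subset_span ?_))
  exact ⟨i, Finset.ne_of_mem_erase hi, rfl⟩

theorem span_image_ne_eq_span_range_of_sum_smul_eq_zero {v : ι → V} {c : ι → K}
    (hsum : ∑ i, c i • v i = 0) {j : ι} (hj : c j ≠ 0) :
    span K (v '' {i | i ≠ j}) = span K (Set.range v) := by
  classical
  refine le_antisymm (span_mono (Set.image_subset_range _ _)) (span_le.mpr ?_)
  rintro _ ⟨i, rfl⟩
  obtain rfl | hij := eq_or_ne i j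
  · exact mem_span_image_ne_of_sum_smul_eq_zero hsum hj
  · exact subset_span ⟨i, hij, rfl⟩

theorem linearIndependent_restrict_ne_of_sum_smul_eq_zero {v : ι → V}
    (hrank : Module.finrank K (span K (Set.range v)) + 1 = Fintype.card ι)
    {c : ι → K} (hsum : ∑ i, c i • v i = 0) {j : ι} (hj : c j ≠ 0) :
    LinearIndependent K (fun i : {i | i ≠ j} => v i) := by
  classical
  rw [linearIndependent_iff_card_eq_finrank_span, Set.finrank, ← Set.image_eq_range,
    span_image_ne_eq_span_range_of_sum_smul_eq_zero hsum hj]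
  simp only [Set.coe_ofPred, Fintype.card_subtype_compl, Fintype.card_unique]
  omega

end

/-- A full-support linear dependency among `m+1` vectors whose span has dimension `m`
forces every proper subfamily to be linearly independent. -/
theorem fullSupportDependency_properSubfamily_linearIndependent
    {K V : Type*} [Field K] [AddCommGroup V] [Module K V] {m : ℕ}
    (v : Fin (m + 1) → V)
    (hrank : Module.finrank K (Submodule.span K (Set.range v)) = m)
    (c : Fin (m + 1) → K) (hc : ∀ i, c i ≠ 0)
    (hsum : ∑ i, c i • v i = 0) :
    ∀ S : Set (Fin (m + 1)), S ≠ Set.univ →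
      LinearIndependent K (fun i : S => v i) := by
  intro S hS
  obtain ⟨j, hj⟩ := (Set.ne_univ_iff_exists_notMem S).mp hS
  have hS_sub : S ⊆ {i | i ≠ j} := fun i hi hij => hj (hij ▸ hi)
  have hind := linearIndependent_restrict_ne_of_sum_smul_eq_zero
    (by rw [hrank, Fintype.card_fin]) hsum (hc j)
  exact hind.comp (Set.inclusion hS_sub) (Set.inclusion_injective hS_sub)
end

section
/- Let K be a field, V and W two K-vector spaces, f : V →ₗ[K] W a linear map, and v : Fin (m+1) → V a super-essential family (its span has dimension m and every proper subfamily is linearly independent). If the span of the image family f ∘ v also has dimension m, then f ∘ v is super-essential: every proper subfamily of (f(v_i))_{i} is linearly independent and the span of the whole image family has dimension m. -/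
/-! Let `U` be the span of `v`. Since `f` maps `U` onto the span of `f ∘ v` and both have
dimension `m`, rank–nullity forces `f` to be injective on `U`. A proper subfamily of `v` is
linearly independent and spans a subspace of `U`, so its image under `f` stays independent. -/

namespace LinearMap

variable {K V W : Type*} [Field K] [AddCommGroup V] [Module K V] [AddCommGroup W] [Module K W]

theorem ker_eq_bot_of_finrank_range_eq [FiniteDimensional K V] {f : V →ₗ[K] W}
    (h : Module.finrank K (range f) = Module.finrank K V) : ker f = ⊥ := by
  have := f.finrank_range_add_finrank_ker
  exact Submodule.finrank_eq_zero.mp (by omega)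

theorem disjoint_ker_of_finrank_map_eq {p : Submodule K V} [FiniteDimensional K p]
    {f : V →ₗ[K] W} (h : Module.finrank K (p.map f) = Module.finrank K p) :
    Disjoint p (ker f) := by
  rw [← injective_domRestrict_iff, ← ker_eq_bot]
  exact ker_eq_bot_of_finrank_range_eq (by rwa [range_domRestrict])

end LinearMap

/-- The image of a super-essential family under a linear map is super-essential,
provided the image family still has rank `m`. -/
theorem superEssential_image_of_rank_eq
    {K V W : Type*} [Field K] [AddCommGroup V] [Module K V]
    [AddCommGroup W] [Module K W] {m : ℕ}
    (f : V →ₗ[K] W) (v : Fin (m + 1) → V)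
    (hrank : Module.finrank K (Submodule.span K (Set.range v)) = m)
    (hind : ∀ S : Set (Fin (m + 1)), S ≠ Set.univ →
      LinearIndependent K (fun i : S => v i))
    (hrank' : Module.finrank K (Submodule.span K (Set.range (f ∘ v))) = m) :
    (∀ S : Set (Fin (m + 1)), S ≠ Set.univ →
      LinearIndependent K (fun i : S => (f ∘ v) i)) ∧
    Module.finrank K (Submodule.span K (Set.range (f ∘ v))) = m := by
  have hinj : Disjoint (Submodule.span K (Set.range v)) (LinearMap.ker f) := by
    have := FiniteDimensional.span_of_finite K (Set.finite_range v)
    refine LinearMap.disjoint_ker_of_finrank_map_eq ?_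
    rw [Submodule.map_span, ← Set.range_comp, hrank', hrank]
  refine ⟨fun S hS => (hind S hS).map (hinj.mono_left (Submodule.span_mono ?_)), hrank'⟩
  exact Set.range_comp_subset_range _ v
end

section
/- Let K be a field and w : Fin (m+1) → (Fin n → K) a super-essential family of m+1 row vectors in K^n (its span has dimension m and every proper subfamily is linearly independent), where m ≤ n. Then there exists a subset S ⊆ Fin n with |S| = m such that the family of restrictions (w_i|_S : S → K)_{i ∈ Fin (m+1)} is again super-essential: its span has dimension m and every proper subfamily of the restrictions is linearly independent. -/
/-!
The coordinate functionals `x ↦ x j`, restricted to `W = span (range w)`, span the dual of `W`,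
so `finrank W = m` of them form a basis of it. On the corresponding set `S` of columns the
restriction map is injective on `W`, hence it preserves both the rank of `w` and the linear
independence of each proper subfamily.
-/

open Module Submodule

namespace Submodule

variable {K : Type*} [Field K]

theorem finrank_map_of_disjoint_ker {V V' : Type*} [AddCommGroup V] [Module K V]
    [AddCommGroup V'] [Module K V'] {f : V →ₗ[K] V'} {W : Submodule K V} [FiniteDimensional K W]
    (h : Disjoint W (LinearMap.ker f)) : finrank K (W.map f) = finrank K W := by
  rw [← LinearMap.range_domRestrict]
  exact LinearMap.finrank_range_of_inj (LinearMap.injective_domRestrict_iff.mpr h)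

theorem span_range_proj_comp_subtype_eq_top {ι : Type*} (W : Submodule K (ι → K))
    [FiniteDimensional K W] :
    span K (Set.range fun i => (LinearMap.proj i).comp W.subtype) = ⊤ := by
  rw [← Subspace.dualCoannihilator_dualAnnihilator_eq (W := span K _),
    dualAnnihilator_eq_top_iff, eq_bot_iff]
  intro x hx
  rw [mem_dualCoannihilator] at hx
  exact (mem_bot K).mpr <| Subtype.ext <| funext fun i => hx _ (subset_span ⟨i, rfl⟩)

theorem exists_finset_card_eq_finrank_disjoint_ker_funLeft {ι : Type*}
    (W : Submodule K (ι → K)) [FiniteDimensional K W] :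
    ∃ S : Finset ι, S.card = finrank K W ∧
      Disjoint W (LinearMap.ker (LinearMap.funLeft K K ((↑) : S → ι))) := by
  set e : ι → Dual K W := fun i => (LinearMap.proj i).comp W.subtype
  obtain ⟨κ, a, ha, hspan, hli⟩ := exists_linearIndependent' K e
  rw [W.span_range_proj_comp_subtype_eq_top] at hspan
  have := hli.finite
  have := Fintype.ofFinite κ
  refine ⟨Finset.univ.map ⟨a, ha⟩, ?_, ?_⟩
  · rw [Finset.card_map, Finset.card_univ, ← finrank_span_eq_card hli, hspan, finrank_top,
      Subspace.dual_finrank_eq]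
  · refine LinearMap.disjoint_ker.mpr fun x hx hxS => ?_
    have hle : span K (Set.range (e ∘ a)) ≤ LinearMap.ker (Dual.eval K W ⟨x, hx⟩) :=
      span_le.mpr <| Set.range_subset_iff.mpr fun k => congrFun hxS ⟨a k, by simp⟩
    rw [hspan, top_le_iff, LinearMap.ker_eq_top] at hle
    have := (forall_dual_apply_eq_zero_iff K (⟨x, hx⟩ : W)).mp (LinearMap.congr_fun hle)
    simpa using congrArg Subtype.val this

end Submodule

theorem superEssential_restrict_columns_general
    {K : Type*} [Field K] {m n : ℕ}
    (w : Fin (m + 1) → (Fin n → K))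
    (hrank : Module.finrank K (Submodule.span K (Set.range w)) = m)
    (hind : ∀ S : Set (Fin (m + 1)), S ≠ Set.univ →
      LinearIndependent K (fun i : S => w i)) :
    ∃ S : Finset (Fin n), S.card = m ∧
      Module.finrank K (Submodule.span K
        (Set.range (fun i : Fin (m + 1) => fun j : S => w i j.1))) = m ∧
      ∀ T : Set (Fin (m + 1)), T ≠ Set.univ →
        LinearIndependent K (fun i : T => fun j : S => w i.1 j.1) := by
  obtain ⟨S, hS, hdisj⟩ :=
    (span K (Set.range w)).exists_finset_card_eq_finrank_disjoint_ker_funLeft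
  set π := LinearMap.funLeft K K ((↑) : S → Fin n)
  have hrange : Set.range (fun i => fun j : S => w i j.1) = π '' Set.range w :=
    Set.range_comp π w
  refine ⟨S, hS.trans hrank, ?_, fun T hT => ?_⟩
  · rw [hrange, ← map_span, finrank_map_of_disjoint_ker hdisj, hrank]
  · exact (hind T hT).map (hdisj.mono_left (span_mono (Set.range_comp_subset_range _ _)))

/-- For a super-essential family of `m+1` row vectors in `K^n` (`m ≤ n`), one can select
`m` columns so that the restricted family is again super-essential. -/
theorem superEssential_restrict_columns
    {K : Type*} [Field K] {m n : ℕ} (hmn : m ≤ n)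
    (w : Fin (m + 1) → (Fin n → K))
    (hrank : Module.finrank K (Submodule.span K (Set.range w)) = m)
    (hind : ∀ S : Set (Fin (m + 1)), S ≠ Set.univ →
      LinearIndependent K (fun i : S => w i)) :
    ∃ S : Finset (Fin n), S.card = m ∧
      Module.finrank K (Submodule.span K
        (Set.range (fun i : Fin (m + 1) => fun j : S => w i j.1))) = m ∧
      ∀ T : Set (Fin (m + 1)), T ≠ Set.univ →
        LinearIndependent K (fun i : T => fun j : S => w i.1 j.1) :=
  superEssential_restrict_columns_general w hrank hind
end

section
/- Let K be a field, V and W two K-vector spaces, f : V →ₗ[K] W a linear map, and w : Fin (m+1) → V a family of m+1 vectors such that the span of the image family f ∘ w has dimension m. Suppose there exist scalars c₀,…,c_m ∈ K with ∑_{i=0}^{m} c_i • f(w_i) = 0 but ∑_{i=0}^{m} c_i • w_i ≠ 0. Then the family w₀,…,w_m is linearly independent over K. -/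
/-!
Consider the coefficient map `d ↦ ∑ dᵢ • f (wᵢ)` on `K^(m+1)`. Its range has dimension `m`, so its
kernel is the line spanned by `c` (which is nonzero since `∑ cᵢ • wᵢ ≠ 0`). Every linear relation
`d` among the `wᵢ` is also one among the `f (wᵢ)`, hence `d = t • c`; then `t • ∑ cᵢ • wᵢ = 0`
forces `t = 0`.
-/

open Module Submodule LinearMap

theorem finrank_ker_fintypeLinearCombination_add_finrank_span {K W ι : Type*} [Field K]
    [AddCommGroup W] [Module K W] [Fintype ι] (v : ι → W) :
    finrank K (ker (Fintype.linearCombination K v)) + finrank K (span K (Set.range v)) =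
      Fintype.card ι := by
  rw [← Fintype.range_linearCombination, add_comm, finrank_range_add_finrank_ker,
    finrank_fintype_fun_eq_card]

theorem ker_fintypeLinearCombination_le_ker_comp {R M N ι : Type*} [CommSemiring R]
    [AddCommMonoid M] [Module R M] [AddCommMonoid N] [Module R N] [Fintype ι]
    (f : M →ₗ[R] N) (v : ι → M) :
    ker (Fintype.linearCombination R v) ≤ ker (Fintype.linearCombination R (f ∘ v)) := by
  intro d hd
  simpa [Fintype.linearCombination_apply] using congrArg f hd

theorem linearIndependent_of_ker_fintypeLinearCombination_le_span_singleton
    {R M ι : Type*} [CommRing R] [IsDomain R] [AddCommGroup M] [Module R M]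
    [Module.IsTorsionFree R M]
    [Fintype ι] {v : ι → M} {c : ι → R}
    (hker : ker (Fintype.linearCombination R v) ≤ R ∙ c)
    (hc : Fintype.linearCombination R v c ≠ 0) :
    LinearIndependent R v := by
  rw [linearIndependent_iff_injective_fintypeLinearCombination, ← ker_eq_bot, eq_bot_iff]
  intro d hd
  obtain ⟨t, rfl⟩ := mem_span_singleton.mp (hker hd)
  have ht : t • Fintype.linearCombination R v c = 0 := by rwa [← map_smul]
  rw [(smul_eq_zero.mp ht).resolve_right hc, zero_smul]
  exact zero_mem _

/-- If the images `f (w i)` have rank `m` and satisfy a dependency that the `w i` themselves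
do not satisfy, then the family `w` is linearly independent. -/
theorem linearIndependent_of_image_dependency
    {K V W : Type*} [Field K] [AddCommGroup V] [Module K V]
    [AddCommGroup W] [Module K W] {m : ℕ}
    (f : V →ₗ[K] W) (w : Fin (m + 1) → V)
    (hrank : Module.finrank K (Submodule.span K (Set.range (f ∘ w))) = m)
    (c : Fin (m + 1) → K)
    (hdep : ∑ i, c i • f (w i) = 0)
    (hne : ∑ i, c i • w i ≠ 0) :
    LinearIndependent K w := by
  have hc : c ≠ 0 := by
    rintro rfl
    simp at hne
  have hker : finrank K (ker (Fintype.linearCombination K (f ∘ w))) = 1 := by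
    have := finrank_ker_fintypeLinearCombination_add_finrank_span (K := K) (f ∘ w)
    rw [hrank, Fintype.card_fin] at this
    omega
  have hline : ker (Fintype.linearCombination K (f ∘ w)) = K ∙ c :=
    eq_span_singleton_of_mem_of_finrank_eq_one hker
      (by simpa [Fintype.linearCombination_apply] using hdep) hc
  refine linearIndependent_of_ker_fintypeLinearCombination_le_span_singleton (c := c) ?_
    (by simpa [Fintype.linearCombination_apply] using hne)
  exact hline ▸ ker_fintypeLinearCombination_le_ker_comp f w
end

section
/- Let K be a field, V a K-vector space, and v : Fin (n+1) → V a family of n+1 vectors whose span has finite dimension n. Then there exists a unique subset T ⊆ Fin (n+1) such that |T| = dim span{v_i : i ∈ T} + 1 and for every proper subset J ⊊ T the subfamily (v_i)_{i∈J} is linearly independent. -/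
/-!
The linear relations among `v₀, …, vₙ` form the kernel of `c ↦ ∑ cᵢ vᵢ` on `K^(n+1)`, which by
rank–nullity is a line spanned by some `c ≠ 0`. A subfamily is dependent iff it carries a nonzero
relation, i.e. iff it contains `supp c`; so `supp c` is the only minimal dependent index set.
Finally `|T| = rank T + 1` forces `T` to be dependent, while the rank of `supp c` is below
`|supp c|` (dependence) and at least `|supp c| - 1` (deleting one index leaves it independent).
-/

open Module Submodule

universe u v w

section

variable {K : Type u} {V : Type v} {ι : Type w} [Field K] [AddCommGroup V] [Module K V] {v : ι → V}

theorem linearIndependent_finset_iff_card_eq_finrank_span (T : Finset ι) :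
    LinearIndependent K (fun i : T => v i) ↔ T.card = finrank K (span K (v '' T)) := by
  rw [linearIndependent_iff_card_eq_finrank_span, Fintype.card_coe, Set.image_eq_range]
  rfl

theorem finrank_span_image_finset_le_card (T : Finset ι) :
    finrank K (span K (v '' T)) ≤ T.card := by
  rw [Set.image_eq_range, ← Fintype.card_coe T]
  exact finrank_range_le_card (R := K) (fun i : T => v i)

theorem card_eq_finrank_span_add_one_of_linearIndependent_erase [DecidableEq ι]
    {T : Finset ι} {i : ι} (hi : i ∈ T)
    (hdep : ¬ LinearIndependent K (fun j : T => v j))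
    (hind : LinearIndependent K (fun j : T.erase i => v j)) :
    T.card = finrank K (span K (v '' T)) + 1 := by
  have hne : finrank K (span K (v '' T)) ≠ T.card := fun h =>
    hdep ((linearIndependent_finset_iff_card_eq_finrank_span T).mpr h.symm)
  have : FiniteDimensional K (span K (v '' T)) :=
    FiniteDimensional.span_of_finite K (T.finite_toSet.image v)
  have herase : (T.erase i).card ≤ finrank K (span K (v '' T)) := by
    rw [(linearIndependent_finset_iff_card_eq_finrank_span _).mp hind]
    exact Submodule.finrank_mono (span_mono (Set.image_mono (Finset.erase_subset i T)))
  have hle := finrank_span_image_finset_le_card (K := K) (v := v) T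
  rw [Finset.card_erase_of_mem hi] at herase
  omega

theorem linearIndependent_finset_iff_not_support_subset {c : ι →₀ K} (hc : c ≠ 0)
    (hker : LinearMap.ker (Finsupp.linearCombination K v) = K ∙ c) (J : Finset ι) :
    LinearIndependent K (fun i : J => v i) ↔ ¬ c.support ⊆ J := by
  change LinearIndepOn K v (J : Set ι) ↔ _
  rw [linearIndepOn_iff]
  constructor
  · intro hind hsupp
    refine hc (hind c ?_ ?_)
    · exact (Finsupp.mem_supported K c).mpr (by exact_mod_cast hsupp)
    · rw [← LinearMap.mem_ker, hker]
      exact mem_span_singleton_self c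
  · intro hsupp l hl hl0
    obtain ⟨a, rfl⟩ := mem_span_singleton.mp (hker ▸ LinearMap.mem_ker.mpr hl0)
    rcases eq_or_ne a 0 with rfl | ha
    · exact zero_smul K c
    · rw [Finsupp.mem_supported, Finsupp.support_smul_eq ha] at hl
      exact absurd (by exact_mod_cast hl) hsupp

theorem exists_ker_linearCombination_eq_span_singleton [Fintype ι]
    (h : finrank K (span K (Set.range v)) + 1 = Fintype.card ι) :
    ∃ c : ι →₀ K, c ≠ 0 ∧ LinearMap.ker (Finsupp.linearCombination K v) = K ∙ c := by
  have hker : finrank K (LinearMap.ker (Finsupp.linearCombination K v)) = 1 := by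
    have := LinearMap.finrank_range_add_finrank_ker (Finsupp.linearCombination K v)
    rw [Finsupp.range_linearCombination, finrank_finsupp_self] at this
    omega
  obtain ⟨c, hc, hc0⟩ := Submodule.exists_mem_ne_zero_of_ne_bot
    (Submodule.one_le_finrank_iff.mp hker.ge)
  exact ⟨c, hc0, eq_span_singleton_of_mem_of_finrank_eq_one hker hc hc0⟩

section Circuit

variable {c : ι →₀ K} (hc : c ≠ 0) (hker : LinearMap.ker (Finsupp.linearCombination K v) = K ∙ c)
include hc hker

theorem linearIndependent_of_ssubset_support {J : Finset ι} (hJ : J ⊂ c.support) :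
    LinearIndependent K (fun i : J => v i) :=
  (linearIndependent_finset_iff_not_support_subset hc hker J).mpr hJ.not_subset

theorem card_support_eq_finrank_span_add_one :
    c.support.card = finrank K (span K (v '' c.support)) + 1 := by
  classical
  obtain ⟨i, hi⟩ := Finsupp.support_nonempty_iff.mpr hc
  refine card_eq_finrank_span_add_one_of_linearIndependent_erase hi ?_
    (linearIndependent_of_ssubset_support hc hker (Finset.erase_ssubset hi))
  exact (linearIndependent_finset_iff_not_support_subset hc hker _).not_left.mpr subset_rfl

theorem eq_support_of_minimal_dependent {T : Finset ι}
    (hdep : ¬ LinearIndependent K (fun i : T => v i))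
    (hmin : ∀ J : Finset ι, J ⊂ T → LinearIndependent K (fun i : J => v i)) :
    T = c.support := by
  classical
  have hsupp : c.support ⊆ T :=
    not_not.mp ((linearIndependent_finset_iff_not_support_subset hc hker T).not.mp hdep)
  refine (Finset.Subset.antisymm_iff.mpr ⟨?_, hsupp⟩)
  intro i hiT
  by_contra hi
  have hind := hmin _ (Finset.erase_ssubset hiT)
  rw [linearIndependent_finset_iff_not_support_subset hc hker] at hind
  exact hind fun j hj => Finset.mem_erase.mpr ⟨fun h => hi (h ▸ hj), hsupp hj⟩

end Circuit

end

/-- If `n+1` vectors span a space of dimension `n`, then there is a unique super-essential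
index subset `T`: `|T|` exceeds the rank of the subfamily indexed by `T` by exactly 1,
and every proper subset of `T` indexes a linearly independent subfamily. -/
theorem existsUnique_superEssential_subset
    {K V : Type*} [Field K] [AddCommGroup V] [Module K V] {n : ℕ}
    (v : Fin (n + 1) → V)
    (hrank : Module.finrank K (Submodule.span K (Set.range v)) = n) :
    ∃! T : Finset (Fin (n + 1)),
      T.card = Module.finrank K (Submodule.span K (v '' ↑T)) + 1 ∧
      ∀ J : Finset (Fin (n + 1)), J ⊂ T →
        LinearIndependent K (fun i : J => v i.1) := by
  obtain ⟨c, hc, hker⟩ := exists_ker_linearCombination_eq_span_singleton (v := v)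
    (by rw [hrank, Fintype.card_fin])
  refine ⟨c.support, ⟨card_support_eq_finrank_span_add_one hc hker,
    fun J hJ => linearIndependent_of_ssubset_support hc hker hJ⟩, ?_⟩
  rintro T ⟨hcard, hmin⟩
  refine eq_support_of_minimal_dependent hc hker (fun hind => ?_) hmin
  rw [linearIndependent_finset_iff_card_eq_finrank_span] at hind
  omega
end

section
/- Let K be a field, V a K-vector space, and v : Fin (n+1) → V a family of n+1 vectors whose span has finite dimension n. Then there exists a subset T ⊆ Fin (n+1) such that for every subset S ⊆ Fin (n+1), the subfamily (v_i)_{i∈S} is linearly dependent if and only if T ⊆ S. -/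
/-!
The linear dependencies of `v` form the kernel of `Finsupp.linearCombination K v`, which by
rank–nullity has dimension `(n + 1) - n = 1`; let `c` span it. A subfamily indexed by `S` is
dependent iff some nonzero dependency is supported in `S`, and since every nonzero dependency is
a nonzero multiple of `c`, this happens iff `supp c ⊆ S`. So `T = supp c`.
-/

open Module Submodule Finsupp

theorem not_linearIndepOn_iff_support_subset {ι R M : Type*} [Ring R] [IsDomain R]
    [AddCommGroup M] [Module R M] {v : ι → M} {c : ι →₀ R}
    (hc : c ∈ LinearMap.ker (linearCombination R v)) (hc0 : c ≠ 0)
    (hker : LinearMap.ker (linearCombination R v) ≤ R ∙ c) (s : Set ι) :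
    ¬ LinearIndepOn R v s ↔ ↑c.support ⊆ s := by
  rw [← mem_supported R, linearIndepOn_iff]
  constructor
  · intro hdep
    push Not at hdep
    obtain ⟨l, hls, hl, hl0⟩ := hdep
    obtain ⟨a, rfl⟩ := mem_span_singleton.1 (hker hl)
    have ha : a ≠ 0 := by
      rintro rfl
      exact hl0 (zero_smul R c)
    rw [mem_supported] at hls ⊢
    rwa [support_smul_eq ha] at hls
  · intro hcs hli
    exact hc0 (hli c hcs hc)

theorem Submodule.exists_ne_zero_le_span_singleton_of_finrank_eq_one {K M : Type*}
    [DivisionRing K] [AddCommGroup M] [Module K M] {p : Submodule K M} (h : finrank K p = 1) :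
    ∃ c ∈ p, c ≠ 0 ∧ p ≤ K ∙ c :=
  (rank_submodule_eq_one_iff p).1 (rank_eq_one_iff_finrank_eq_one.2 h)

theorem finrank_span_add_finrank_ker_linearCombination {ι K V : Type*} [Fintype ι]
    [DivisionRing K] [AddCommGroup V] [Module K V] (v : ι → V) :
    finrank K (span K (Set.range v)) + finrank K (LinearMap.ker (linearCombination K v)) =
      Fintype.card ι := by
  rw [← range_linearCombination, LinearMap.finrank_range_add_finrank_ker,
    finrank_finsupp_self]

/-- If `n+1` vectors span a space of dimension `n`, then there is an index subset `T`
such that a subfamily is linearly dependent exactly when its index set contains `T`. -/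
theorem exists_minimal_dependent_subset
    {K V : Type*} [Field K] [AddCommGroup V] [Module K V] {n : ℕ}
    (v : Fin (n + 1) → V)
    (hrank : Module.finrank K (Submodule.span K (Set.range v)) = n) :
    ∃ T : Finset (Fin (n + 1)), ∀ S : Finset (Fin (n + 1)),
      (¬ LinearIndependent K (fun i : S => v i.1)) ↔ T ⊆ S := by
  have hker : finrank K (LinearMap.ker (linearCombination K v)) = 1 := by
    have := finrank_span_add_finrank_ker_linearCombination (K := K) v
    rw [hrank, Fintype.card_fin] at this
    omega
  obtain ⟨c, hc, hc0, hle⟩ := exists_ne_zero_le_span_singleton_of_finrank_eq_one hker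
  refine ⟨c.support, fun S => ?_⟩
  rw [← Finset.coe_subset]
  exact not_linearIndepOn_iff_support_subset hc hc0 hle S
end

section
/- Let F be a field and M a p × q matrix whose entries are polynomials in MvPolynomial (Fin k) F. Let K be the fraction field of MvPolynomial (Fin k) F and let r be the rank of M viewed as a matrix over K. Then there exists a nonzero polynomial g ∈ MvPolynomial (Fin k) F such that for every point a : Fin k → F with g(a) ≠ 0, the rank (over F) of the matrix obtained by evaluating every entry of M at a equals r. -/
/-!
Over a field, `s ≤ rank A` iff `A` has a nonzero `s × s` minor. Take an `r × r` minor of `M`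
that is nonzero over the fraction field and let `g` be its determinant, a polynomial. Where
`g(a) ≠ 0` the same minor of `M(a)` survives, so `rank M(a) ≥ r`. Conversely every nonzero minor
of `M(a)` is the evaluation of a nonzero polynomial minor of `M`, which stays nonzero over the
fraction field, so `rank M(a) ≤ r`.
-/

namespace Matrix

variable {m n K : Type*} [Field K]

theorem exists_linearIndependent_col_comp_of_le_rank [Fintype n] {s : ℕ} (A : Matrix m n K)
    (hs : s ≤ A.rank) : ∃ c : Fin s → n, LinearIndependent K (A.col ∘ c) := by
  obtain ⟨κ, a, ha, hspan, hli⟩ := exists_linearIndependent' K A.col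
  have : Finite κ := Finite.of_injective a ha
  have := Fintype.ofFinite κ
  rw [rank_eq_finrank_span_cols, ← hspan, finrank_span_eq_card hli] at hs
  obtain ⟨e⟩ := Function.Embedding.nonempty_of_card_le
    (by simpa using hs : Fintype.card (Fin s) ≤ Fintype.card κ)
  exact ⟨a ∘ e, hli.comp e e.injective⟩

theorem exists_submatrix_det_ne_zero_of_le_rank [Fintype m] [Fintype n] {s : ℕ}
    (A : Matrix m n K) (hs : s ≤ A.rank) :
    ∃ (r : Fin s → m) (c : Fin s → n), (A.submatrix r c).det ≠ 0 := by
  obtain ⟨c, hc⟩ := A.exists_linearIndependent_col_comp_of_le_rank hs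
  have hrank : s ≤ (A.submatrix id c)ᵀ.rank := by
    rw [LinearIndependent.rank_matrix (M := (A.submatrix id c)ᵀ) hc, Fintype.card_fin]
  obtain ⟨r, hr⟩ := (A.submatrix id c)ᵀ.exists_linearIndependent_col_comp_of_le_rank hrank
  exact ⟨r, c, (isUnit_iff_isUnit_det _).1 (linearIndependent_rows_iff_isUnit.1 hr) |>.ne_zero⟩

theorem le_rank_of_submatrix_det_ne_zero {R ι : Type*} [CommRing R] [IsDomain R] [Fintype n]
    [Fintype ι] [DecidableEq ι] {A : Matrix m n R} {r : ι → m} {c : ι → n}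
    (h : (A.submatrix r c).det ≠ 0) : Fintype.card ι ≤ A.rank :=
  rank_of_det_ne_zero h ▸ A.rank_submatrix_le r c

theorem det_submatrix_map {R S ι : Type*} [CommRing R] [CommRing S] [Fintype ι] [DecidableEq ι]
    (φ : R →+* S) (A : Matrix m n R) (r : ι → m) (c : ι → n) :
    ((A.map φ).submatrix r c).det = φ (A.submatrix r c).det := by
  rw [submatrix_map, RingHom.map_det]
  rfl

theorem rank_map_le_rank_map_of_injective {R L : Type*} [CommRing R] [Field L] [Fintype m]
    [Fintype n] {φ : R →+* K} (hφ : Function.Injective φ) (ψ : R →+* L) (A : Matrix m n R) :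
    (A.map ψ).rank ≤ (A.map φ).rank := by
  obtain ⟨r, c, h⟩ := (A.map ψ).exists_submatrix_det_ne_zero_of_le_rank le_rfl
  rw [det_submatrix_map] at h
  have hdet : ((A.map φ).submatrix r c).det ≠ 0 := by
    rw [det_submatrix_map, map_ne_zero_iff φ hφ]
    exact ne_of_apply_ne ψ (by rwa [map_zero])
  simpa using le_rank_of_submatrix_det_ne_zero hdet

end Matrix

open Matrix in
/-- Outside the zero set of a suitable nonzero polynomial, evaluating a symbolic matrix
preserves its rank. -/
theorem exists_generic_rank_preserving_evaluation
    {F : Type*} [Field F] {p q k r : ℕ}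
    (M : Matrix (Fin p) (Fin q) (MvPolynomial (Fin k) F))
    (hr : (M.map (algebraMap (MvPolynomial (Fin k) F)
      (FractionRing (MvPolynomial (Fin k) F)))).rank = r) :
    ∃ g : MvPolynomial (Fin k) F, g ≠ 0 ∧
      ∀ a : Fin k → F, MvPolynomial.eval a g ≠ 0 →
        (M.map (MvPolynomial.eval a)).rank = r := by
  subst hr
  set φ := algebraMap (MvPolynomial (Fin k) F) (FractionRing (MvPolynomial (Fin k) F))
  obtain ⟨f, g, hfg⟩ := (M.map φ).exists_submatrix_det_ne_zero_of_le_rank le_rfl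
  rw [det_submatrix_map] at hfg
  refine ⟨(M.submatrix f g).det, ne_of_apply_ne φ (by rwa [map_zero]), fun a ha ↦ ?_⟩
  refine le_antisymm (rank_map_le_rank_map_of_injective (IsFractionRing.injective _ _) _ M) ?_
  rw [← det_submatrix_map] at ha
  simpa using le_rank_of_submatrix_det_ne_zero ha
end
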